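/- arXiv:2002.10681 — 3 statements merged into one kernel-verified Lean document; each statement's English description precedes it below -/
import Mathlib

section
/- Let 𝒩 and ℳ be finite sets, λ : 𝒩 → ℝ, and let x₁, x₂ : 𝒩 → ℝ and z : 𝒩 → ℳ → ℝ take values in {0,1}. Let s : 𝒩 → ℳ → ℝ. Then the family of quadratic constraints s n m = z n m · S n (x₁ n, x₂ n) holds for all n ∈ 𝒩, m ∈ ℳ if and only if there exists a pair (v₁, v₂) in the McCormick set 𝒱(x₁,x₂,z) such that s n m = (1.02·λ n + 1.5)·v₁ n m − (0.02·λ n + 1.5)·v₂ n m + 2500·(z n m − v₁ n m) for all n ∈ 𝒩, m ∈ ℳ. -/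
/-- The McCormick set `𝒱(x₁, x₂, z)`: pairs `(v₁, v₂)` of `{0,1}`-valued
families satisfying the McCormick inequalities with respect to `x₁, x₂, z`. -/
def McCormickSet {N M : Type*} (x₁ x₂ : N → ℝ) (z : N → M → ℝ)
    (v₁ v₂ : N → M → ℝ) : Prop :=
  (∀ n m, v₁ n m = 0 ∨ v₁ n m = 1) ∧
  (∀ n m, v₂ n m = 0 ∨ v₂ n m = 1) ∧
  (∀ n m, v₁ n m ≤ x₁ n ∧ v₁ n m ≤ z n m ∧ x₁ n + z n m - 1 ≤ v₁ n m ∧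
          v₂ n m ≤ x₂ n ∧ v₂ n m ≤ z n m ∧ x₂ n + z n m - 1 ≤ v₂ n m)

/-- The split data-flow function `S_n(a, b)` for traffic loads `λ`. -/
def splitFlow {N : Type*} (lam : N → ℝ) (n : N) (a b : ℝ) : ℝ :=
  a * (1.02 * lam n + 1.5) - b * (0.02 * lam n + 1.5) + 2500 * (1 - a)

/-- The quadratic routing-assignment constraints
`s n m = z n m * S_n(x₁ n, x₂ n)` hold for all `n, m` iff there is a pair
`(v₁, v₂)` in the McCormick set `𝒱(x₁, x₂, z)` realizing the linearized
constraints. -/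
theorem quadratic_constraint_iff_mccormick {N M : Type*} [Fintype N] [Fintype M]
    (lam : N → ℝ) (x₁ x₂ : N → ℝ) (z : N → M → ℝ) (s : N → M → ℝ)
    (hx₁ : ∀ n, x₁ n = 0 ∨ x₁ n = 1) (hx₂ : ∀ n, x₂ n = 0 ∨ x₂ n = 1)
    (hz : ∀ n m, z n m = 0 ∨ z n m = 1) :
    (∀ n m, s n m = z n m * splitFlow lam n (x₁ n) (x₂ n)) ↔
      ∃ v₁ v₂ : N → M → ℝ, McCormickSet x₁ x₂ z v₁ v₂ ∧
        ∀ n m, s n m = (1.02 * lam n + 1.5) * v₁ n m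
          - (0.02 * lam n + 1.5) * v₂ n m + 2500 * (z n m - v₁ n m) := by
  constructor
  · intro h
    refine ⟨fun n m => x₁ n * z n m, fun n m => x₂ n * z n m, ⟨?_, ?_, ?_⟩, ?_⟩
    · intro n m; rcases hx₁ n with h1 | h1 <;> rcases hz n m with h2 | h2 <;>
        simp [h1, h2]
    · intro n m; rcases hx₂ n with h1 | h1 <;> rcases hz n m with h2 | h2 <;>
        simp [h1, h2]
    · intro n m; rcases hx₁ n with h1 | h1 <;> rcases hx₂ n with h3 | h3 <;>
        rcases hz n m with h2 | h2 <;> simp [h1, h2, h3] <;> norm_num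
    · intro n m; rw [h n m]; simp only [splitFlow]; ring
  · rintro ⟨v₁, v₂, ⟨hb1, hb2, hineq⟩, heq⟩ n m
    obtain ⟨a1, a2, a3, b1, b2, b3⟩ := hineq n m
    have e1 : v₁ n m = x₁ n * z n m := by
      rcases hx₁ n with h1 | h1 <;> rcases hz n m with h2 | h2 <;>
        rcases hb1 n m with h3 | h3 <;>
        rw [h1] at a1 a3 ⊢ <;> rw [h2] at a2 a3 ⊢ <;> rw [h3] <;> norm_num <;> linarith
    have e2 : v₂ n m = x₂ n * z n m := by
      rcases hx₂ n with h1 | h1 <;> rcases hz n m with h2 | h2 <;>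
        rcases hb2 n m with h3 | h3 <;>
        rw [h1] at b1 b3 ⊢ <;> rw [h2] at b2 b3 ⊢ <;> rw [h3] <;> norm_num <;> linarith
    rw [heq n m, e1, e2]; simp only [splitFlow]; ring
end

section
/- Let 𝒩 and ℳ be finite sets and λ : 𝒩 → ℝ. Let T denote the set of tuples t = (x₁, x₂, z, s) with x₁, x₂ : 𝒩 → ℝ, z : 𝒩 → ℳ → ℝ, s : 𝒩 → ℳ → ℝ, where x₁, x₂, z take values in {0,1}. Let C : T → Prop be any predicate and F : T → ℝ any objective function. Then the set of objective values {F t : t ∈ T, C t, and s n m = z n m · S n (x₁ n, x₂ n) for all n, m} equals the set {F t : t ∈ T, C t, and there exists (v₁,v₂) ∈ 𝒱(x₁,x₂,z) with s n m = (1.02·λ n + 1.5)·v₁ n m − (0.02·λ n + 1.5)·v₂ n m + 2500·(z n m − v₁ n m) for all n, m}. In particular, the infima of the two optimization problems coincide, i.e., the linearized problem 𝒫₂ is equivalent to the quadratic problem 𝒫₁. -/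
/-- Equivalence of the quadratic problem `𝒫₁` and the linearized problem
`𝒫₂`: the achievable objective values coincide as sets, hence so do the
infima. `C` models all other constraints and `F` the cost objective. -/
theorem linearized_problem_equivalent {N M : Type*} [Fintype N] [Fintype M]
    (lam : N → ℝ)
    (C : (N → ℝ) → (N → ℝ) → (N → M → ℝ) → (N → M → ℝ) → Prop)
    (F : (N → ℝ) → (N → ℝ) → (N → M → ℝ) → (N → M → ℝ) → ℝ) :
    {w : ℝ | ∃ (x₁ x₂ : N → ℝ) (z s : N → M → ℝ),
        (∀ n, x₁ n = 0 ∨ x₁ n = 1) ∧ (∀ n, x₂ n = 0 ∨ x₂ n = 1) ∧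
        (∀ n m, z n m = 0 ∨ z n m = 1) ∧ C x₁ x₂ z s ∧
        (∀ n m, s n m = z n m * splitFlow lam n (x₁ n) (x₂ n)) ∧
        w = F x₁ x₂ z s} =
    {w : ℝ | ∃ (x₁ x₂ : N → ℝ) (z s : N → M → ℝ),
        (∀ n, x₁ n = 0 ∨ x₁ n = 1) ∧ (∀ n, x₂ n = 0 ∨ x₂ n = 1) ∧
        (∀ n m, z n m = 0 ∨ z n m = 1) ∧ C x₁ x₂ z s ∧
        (∃ v₁ v₂ : N → M → ℝ, McCormickSet x₁ x₂ z v₁ v₂ ∧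
          ∀ n m, s n m = (1.02 * lam n + 1.5) * v₁ n m
            - (0.02 * lam n + 1.5) * v₂ n m + 2500 * (z n m - v₁ n m)) ∧
        w = F x₁ x₂ z s} ∧
    sInf {w : ℝ | ∃ (x₁ x₂ : N → ℝ) (z s : N → M → ℝ),
        (∀ n, x₁ n = 0 ∨ x₁ n = 1) ∧ (∀ n, x₂ n = 0 ∨ x₂ n = 1) ∧
        (∀ n m, z n m = 0 ∨ z n m = 1) ∧ C x₁ x₂ z s ∧
        (∀ n m, s n m = z n m * splitFlow lam n (x₁ n) (x₂ n)) ∧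
        w = F x₁ x₂ z s} =
    sInf {w : ℝ | ∃ (x₁ x₂ : N → ℝ) (z s : N → M → ℝ),
        (∀ n, x₁ n = 0 ∨ x₁ n = 1) ∧ (∀ n, x₂ n = 0 ∨ x₂ n = 1) ∧
        (∀ n m, z n m = 0 ∨ z n m = 1) ∧ C x₁ x₂ z s ∧
        (∃ v₁ v₂ : N → M → ℝ, McCormickSet x₁ x₂ z v₁ v₂ ∧
          ∀ n m, s n m = (1.02 * lam n + 1.5) * v₁ n m
            - (0.02 * lam n + 1.5) * v₂ n m + 2500 * (z n m - v₁ n m)) ∧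
        w = F x₁ x₂ z s} := by
  have key : ∀ (x₁ x₂ : N → ℝ) (z s : N → M → ℝ),
      (∀ n, x₁ n = 0 ∨ x₁ n = 1) → (∀ n, x₂ n = 0 ∨ x₂ n = 1) →
      (∀ n m, z n m = 0 ∨ z n m = 1) →
      ((∀ n m, s n m = z n m * splitFlow lam n (x₁ n) (x₂ n)) ↔
       (∃ v₁ v₂ : N → M → ℝ, McCormickSet x₁ x₂ z v₁ v₂ ∧
          ∀ n m, s n m = (1.02 * lam n + 1.5) * v₁ n m
            - (0.02 * lam n + 1.5) * v₂ n m + 2500 * (z n m - v₁ n m))) := by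
    intro x₁ x₂ z s hx₁ hx₂ hz
    constructor
    · intro hs
      refine ⟨fun n m => x₁ n * z n m, fun n m => x₂ n * z n m, ⟨?_, ?_, ?_⟩, ?_⟩
      · intro n m; rcases hx₁ n with h | h <;> rcases hz n m with h' | h' <;>
          simp [h, h']
      · intro n m; rcases hx₂ n with h | h <;> rcases hz n m with h' | h' <;>
          simp [h, h']
      · intro n m
        rcases hx₁ n with h | h <;> rcases hx₂ n with h2 | h2 <;>
          rcases hz n m with h' | h' <;> norm_num [h, h2, h']
      · intro n m; rw [hs n m, splitFlow]; ring
    · rintro ⟨v₁, v₂, ⟨hv₁b, hv₂b, hmc⟩, hs⟩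
      intro n m
      have h1 : v₁ n m = x₁ n * z n m := by
        obtain ⟨a1, a2, a3, _, _, _⟩ := hmc n m
        rcases hx₁ n with h | h <;> rcases hz n m with h' | h' <;>
          rcases hv₁b n m with hb | hb <;>
          simp only [h, h', hb] at a1 a2 a3 ⊢ <;>
          (try norm_num) <;> linarith
      have h2 : v₂ n m = x₂ n * z n m := by
        obtain ⟨_, _, _, a1, a2, a3⟩ := hmc n m
        rcases hx₂ n with h | h <;> rcases hz n m with h' | h' <;>
          rcases hv₂b n m with hb | hb <;>
          simp only [h, h', hb] at a1 a2 a3 ⊢ <;>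
          (try norm_num) <;> linarith
      rw [hs n m, h1, h2, splitFlow]; ring
  have hset : {w : ℝ | ∃ (x₁ x₂ : N → ℝ) (z s : N → M → ℝ),
        (∀ n, x₁ n = 0 ∨ x₁ n = 1) ∧ (∀ n, x₂ n = 0 ∨ x₂ n = 1) ∧
        (∀ n m, z n m = 0 ∨ z n m = 1) ∧ C x₁ x₂ z s ∧
        (∀ n m, s n m = z n m * splitFlow lam n (x₁ n) (x₂ n)) ∧
        w = F x₁ x₂ z s} =
      {w : ℝ | ∃ (x₁ x₂ : N → ℝ) (z s : N → M → ℝ),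
        (∀ n, x₁ n = 0 ∨ x₁ n = 1) ∧ (∀ n, x₂ n = 0 ∨ x₂ n = 1) ∧
        (∀ n m, z n m = 0 ∨ z n m = 1) ∧ C x₁ x₂ z s ∧
        (∃ v₁ v₂ : N → M → ℝ, McCormickSet x₁ x₂ z v₁ v₂ ∧
          ∀ n m, s n m = (1.02 * lam n + 1.5) * v₁ n m
            - (0.02 * lam n + 1.5) * v₂ n m + 2500 * (z n m - v₁ n m)) ∧
        w = F x₁ x₂ z s} := by
    ext w
    constructor
    · rintro ⟨x₁, x₂, z, s, h1, h2, h3, h4, h5, h6⟩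
      exact ⟨x₁, x₂, z, s, h1, h2, h3, h4, (key x₁ x₂ z s h1 h2 h3).mp h5, h6⟩
    · rintro ⟨x₁, x₂, z, s, h1, h2, h3, h4, h5, h6⟩
      exact ⟨x₁, x₂, z, s, h1, h2, h3, h4, (key x₁ x₂ z s h1 h2 h3).mpr h5, h6⟩
  exact ⟨hset, by rw [hset]⟩
end

section
/- Let 𝒩 and ℳ be finite sets and let x₁, x₂ : 𝒩 → ℝ and y₁, y₂, z : 𝒩 → ℳ → ℝ all take values in {0,1}. Assume the placement constraints: (i) y₁ n m ≤ y₂ n m for all n, m; (ii) x₂ n ≤ x₁ n for all n; (iii) x₁ n + Σ_{m∈ℳ} y₁ n m = 1 and x₂ n + Σ_{m∈ℳ} y₂ n m = 1 for all n; (iv) Σ_{m∈ℳ} z n m ≤ 1 for all n; and (v) y₂ n m ≤ z n m for all n, m. Then for every n ∈ 𝒩 exactly one of the following holds: either z n m = 0 for all m, in which case x₁ n = 1, x₂ n = 1, and y₁ n m = y₂ n m = 0 for all m (fully decentralized BS); or there is a unique m ∈ ℳ with z n m = 1, in which case y₁ n m' = y₂ n m' = 0 for all m' ≠ m, and the tuple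 (x₁ n, x₂ n, y₁ n m, y₂ n m) equals one of (1,1,0,0), (1,0,0,1), or (0,0,1,1), corresponding respectively to functional splits S1, S2, S3 served by CU-m. -/
open Finset

/-- Under the vRAN placement constraints (function chaining at CUs and DUs,
no duplicate deployment, each DU assigned to at most one CU, and assignment
consistency), every DU is either fully decentralized, or assigned to a unique
CU implementing exactly one of the splits S1, S2, S3. -/
theorem vran_split_classification {N M : Type*} [Fintype N] [Fintype M]
    (x₁ x₂ : N → ℝ) (y₁ y₂ z : N → M → ℝ)
    (hx₁ : ∀ n, x₁ n = 0 ∨ x₁ n = 1) (hx₂ : ∀ n, x₂ n = 0 ∨ x₂ n = 1)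
    (hy₁ : ∀ n m, y₁ n m = 0 ∨ y₁ n m = 1)
    (hy₂ : ∀ n m, y₂ n m = 0 ∨ y₂ n m = 1)
    (hz : ∀ n m, z n m = 0 ∨ z n m = 1)
    (hchainCU : ∀ n m, y₁ n m ≤ y₂ n m)
    (hchainDU : ∀ n, x₂ n ≤ x₁ n)
    (hdup₁ : ∀ n, x₁ n + ∑ m, y₁ n m = 1)
    (hdup₂ : ∀ n, x₂ n + ∑ m, y₂ n m = 1)
    (hassign : ∀ n, ∑ m, z n m ≤ 1)
    (hconsist : ∀ n m, y₂ n m ≤ z n m) :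
    ∀ n, Xor'
      ((∀ m, z n m = 0) ∧ x₁ n = 1 ∧ x₂ n = 1 ∧
        ∀ m, y₁ n m = 0 ∧ y₂ n m = 0)
      (∃ m, z n m = 1 ∧ (∀ m', z n m' = 1 → m' = m) ∧
        (∀ m', m' ≠ m → y₁ n m' = 0 ∧ y₂ n m' = 0) ∧
        ((x₁ n, x₂ n, y₁ n m, y₂ n m) = (1, 1, 0, 0) ∨
         (x₁ n, x₂ n, y₁ n m, y₂ n m) = (1, 0, 0, 1) ∨
         (x₁ n, x₂ n, y₁ n m, y₂ n m) = (0, 0, 1, 1))) := by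
  classical
  intro n
  by_cases hall : ∀ m, z n m = 0
  · -- fully decentralized case
    have hy2z : ∀ m, y₂ n m = 0 := by
      intro m
      rcases hy₂ n m with h | h
      · exact h
      · have := hconsist n m; rw [h, hall m] at this; linarith
    have hy1z : ∀ m, y₁ n m = 0 := by
      intro m
      rcases hy₁ n m with h | h
      · exact h
      · have := hchainCU n m; rw [h, hy2z m] at this; linarith
    refine Or.inl ⟨⟨hall, ?_, ?_, fun m => ⟨hy1z m, hy2z m⟩⟩, ?_⟩
    · have := hdup₁ n
      rw [Finset.sum_eq_zero (fun m _ => hy1z m)] at this; linarith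
    · have := hdup₂ n
      rw [Finset.sum_eq_zero (fun m _ => hy2z m)] at this; linarith
    · rintro ⟨m, hm1, -⟩
      rw [hall m] at hm1; norm_num at hm1
  · push_neg at hall
    obtain ⟨m, hm⟩ := hall
    have hzm : z n m = 1 := (hz n m).resolve_left hm
    have hznn : ∀ m', (0:ℝ) ≤ z n m' := by
      intro m'; rcases hz n m' with h | h <;> rw [h] <;> norm_num
    -- uniqueness of m
    have huniq : ∀ m', z n m' = 1 → m' = m := by
      intro m' hm'
      by_contra hne
      have hsum := hassign n
      rw [← Finset.sum_erase_add _ _ (Finset.mem_univ m)] at hsum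
      have hmem : m' ∈ Finset.univ.erase m := Finset.mem_erase.2 ⟨hne, Finset.mem_univ m'⟩
      have := Finset.single_le_sum (f := z n) (fun i _ => hznn i) hmem
      rw [hm', hzm] at *
      linarith
    have hzother : ∀ m', m' ≠ m → z n m' = 0 := by
      intro m' hne
      rcases hz n m' with h | h
      · exact h
      · exact absurd (huniq m' h) hne
    have hy2other : ∀ m', m' ≠ m → y₂ n m' = 0 := by
      intro m' hne
      rcases hy₂ n m' with h | h
      · exact h
      · have := hconsist n m'; rw [h, hzother m' hne] at this; linarith
    have hy1other : ∀ m', m' ≠ m → y₁ n m' = 0 := by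
      intro m' hne
      rcases hy₁ n m' with h | h
      · exact h
      · have := hchainCU n m'; rw [h, hy2other m' hne] at this; linarith
    have hs1 : x₁ n + y₁ n m = 1 := by
      have := hdup₁ n
      rwa [Finset.sum_eq_single m (fun b _ hb => hy1other b hb)
        (fun h => absurd (Finset.mem_univ m) h)] at this
    have hs2 : x₂ n + y₂ n m = 1 := by
      have := hdup₂ n
      rwa [Finset.sum_eq_single m (fun b _ hb => hy2other b hb)
        (fun h => absurd (Finset.mem_univ m) h)] at this
    refine Or.inr ⟨?_, ?_⟩
    · refine ⟨m, hzm, huniq, fun m' hne => ⟨hy1other m' hne, hy2other m' hne⟩, ?_⟩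
      have hc := hchainCU n m
      have hd := hchainDU n
      rcases hy₂ n m with h2 | h2 <;> rcases hy₁ n m with h1 | h1 <;>
        rcases hx₁ n with g1 | g1 <;> rcases hx₂ n with g2 | g2 <;>
        simp_all <;> linarith
    · rintro ⟨h0, -⟩
      rw [h0 m] at hzm; norm_num at hzm
end
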